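/- arXiv:2203.15014 — 5 statements merged into one kernel-verified Lean document; each statement's English description precedes it below -/
import Mathlib

section
/- Let d be an odd positive integer and let γ = (γ_1,…,γ_d) and Γ = (Γ_1,…,Γ_d) be two left-handed Clifford families of size d, acting on ℂ^n with n = 2^{(d−1)/2}. For j = 1,…,d set T_j = γ_j ⊗ Γ_j (Kronecker product, an n²×n² matrix); these are commuting self-adjoint involutions. For η = (η_1,…,η_d) ∈ {−1,1}^d let F_η = ⋂_{j=1}^d ker(T_j − η_j·𝟙) ⊆ ℂ^{n²}. Then the complex dimension of F_η equals 1 if either (d ≡ 1 mod 4 and the number of indices j with η_j = −1 is even) or (d ≡ 3 mod 4 and the number of indices j with η_j = −1 is odd), and the dimension of F_η equals 0 otherwise. -/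
/-!
The joint eigenspace `F_η` is the range of the commuting idempotent `P = ∏ⱼ (1 + ηⱼ Tⱼ) / 2`, so
its dimension is `tr P`. Expanding the product gives `tr P = 2⁻ᵈ ∑_S η_S tr(γ_S) tr(Γ_S)`, summed
over ordered sub-products. A product `γ_S` of distinct generators with `∅ ≠ S ≠ {1, …, d}`
anticommutes with an involution (a generator outside `S` if `|S|` is odd, the first factor of
`γ_S` if `|S|` is even), hence is traceless. Only `S = ∅` and the full product survive, and by
handedness the latter contributes `η₁ ⋯ η_d · i^(d-1) · n²`, so
`dim F_η = (1 + (-1) ^ (#{j | η_j = -1} + (d - 1) / 2)) / 2`.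
-/

open Matrix Kronecker

theorem Finset.prod_intCast_eq_neg_one_pow_card_filter {ι R : Type*} [CommRing R] (s : Finset ι)
    {η : ι → ℤ} (hη : ∀ j ∈ s, η j = 1 ∨ η j = -1) :
    ∏ j ∈ s, (η j : R) = (-1) ^ (s.filter fun j => η j = -1).card := by
  have hη_ite (j : ι) (hj : j ∈ s) : (η j : R) = if η j = -1 then -1 else 1 := by
    rcases hη j hj with h | h <;> simp [h]
  rw [prod_congr rfl hη_ite, prod_ite, prod_const, prod_const_one, mul_one]

namespace List

variable {ι : Type*}

theorem prod_map_one_add {R : Type*} [Ring R] (f : ι → R) (l : List ι) :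
    (l.map (1 + f ·)).prod = (l.sublists'.map fun s => (s.map f).prod).sum := by
  induction l with
  | nil => simp
  | cons a t ih =>
    rw [map_cons, prod_cons, sublists'_cons, map_append, sum_append, map_map, ih, add_mul, one_mul,
      ← sum_map_mul_left]
    simp [Function.comp_def]

theorem prod_map_smul {M N : Type*} [CommMonoid M] [Monoid N] [MulAction M N]
    [IsScalarTower M N N] [SMulCommClass M N N] (c : ι → M) (f : ι → N) (l : List ι) :
    (l.map fun j => c j • f j).prod = (l.map c).prod • (l.map f).prod := by
  induction l with
  | nil => simp
  | cons a t ih => simp [ih, smul_mul_smul_comm]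

theorem mul_prod_eq_prod_of_isIdempotentElem {M : Type*} [Monoid M] {x : M} {l : List M}
    (hx : x ∈ l) (hidem : IsIdempotentElem x) (hcomm : ∀ y ∈ l, Commute x y) :
    x * l.prod = l.prod := by
  induction l with
  | nil => simp at hx
  | cons a t ih =>
    rw [prod_cons]
    rcases mem_cons.mp hx with rfl | hxt
    · rw [← mul_assoc, hidem.eq]
    · rw [← mul_assoc, (hcomm a mem_cons_self).eq, mul_assoc,
        ih hxt fun y hy => hcomm y (mem_cons_of_mem a hy)]

theorem mul_prod_of_forall_mul_eq_neg {R : Type*} [Ring R] {g : R} {l : List R}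
    (h : ∀ x ∈ l, g * x = -(x * g)) : g * l.prod = (-1) ^ l.length * l.prod * g := by
  induction l with
  | nil => simp
  | cons a t ih =>
    rw [prod_cons, ← mul_assoc, h a mem_cons_self, neg_mul, mul_assoc,
      ih fun x hx => h x (mem_cons_of_mem a hx), ← mul_assoc, ← mul_assoc,
      ← ((Commute.neg_one_left a).pow_left t.length).eq, length_cons, pow_succ]
    noncomm_ring

end List

namespace Matrix

variable {ι m n R : Type*} [Fintype m]

theorem trace_eq_zero_of_mul_eq_neg_mul [DecidableEq m] [CommRing R] [NoZeroDivisors R]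
    [CharZero R] {g X : Matrix m m R} (hg : g * g = 1) (h : g * X = -(X * g)) : trace X = 0 := by
  refine CharZero.eq_neg_self_iff.mp ?_
  calc trace X = trace (g * (g * X)) := by rw [← mul_assoc, hg, one_mul]
    _ = trace (g * X * g) := trace_mul_comm _ _
    _ = -trace X := by rw [h, neg_mul, trace_neg, mul_assoc, hg, mul_one]

theorem list_prod_map_kronecker [DecidableEq m] [CommSemiring R] [Fintype n] [DecidableEq n]
    (A : ι → Matrix m m R) (B : ι → Matrix n n R) (l : List ι) :
    (l.map fun j => A j ⊗ₖ B j).prod = (l.map A).prod ⊗ₖ (l.map B).prod := by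
  induction l with
  | nil => simp
  | cons a t ih => simp [ih, mul_kronecker_mul]

theorem kronecker_mul_self_eq_one [DecidableEq m] [CommSemiring R] [Fintype n] [DecidableEq n]
    {A : Matrix m m R} {B : Matrix n n R} (hA : A * A = 1) (hB : B * B = 1) :
    A ⊗ₖ B * A ⊗ₖ B = 1 := by
  rw [← mul_kronecker_mul, hA, hB, one_kronecker_one]

theorem commute_kronecker_of_mul_eq_neg [CommRing R] [Fintype n]
    {A A' : Matrix m m R} {B B' : Matrix n n R} (hA : A * A' = -(A' * A))
    (hB : B * B' = -(B' * B)) : Commute (A ⊗ₖ B) (A' ⊗ₖ B') := by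
  rw [Commute, SemiconjBy, ← mul_kronecker_mul, ← mul_kronecker_mul, hA, hB,
    ← neg_one_smul R (A' * A), ← neg_one_smul R (B' * B), smul_kronecker, kronecker_smul,
    smul_smul, neg_one_mul, neg_neg, one_smul]

theorem trace_list_prod_map_one_add [DecidableEq m] [Ring R] (f : ι → Matrix m m R)
    {l : List ι} (hl : l.Nodup) (hne : l ≠ [])
    (htr : ∀ s, s.Sublist l → s ≠ [] → s ≠ l → trace (s.map f).prod = 0) :
    trace (l.map (1 + f ·)).prod = Fintype.card m + trace (l.map f).prod := by
  classical
  rw [List.prod_map_one_add, ← List.sum_toFinset _ (List.nodup_sublists'.mpr hl), trace_sum,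
    Finset.sum_eq_add_of_mem [] l (by simp) (by simp) hne.symm]
  · simp
  · intro s hs hsl
    exact htr s (by simpa using hs) hsl.1 hsl.2

end Matrix

section Clifford

variable {ι : Type*}

theorem mul_self_eq_one_of_anticommutator_eq_ite {K A : Type*} [Field K] [NeZero (2 : K)] [Ring A]
    [Module K A] [DecidableEq ι] {γ : ι → A}
    (h : ∀ i j, γ i * γ j + γ j * γ i = if i = j then (2 : K) • (1 : A) else 0) (i : ι) :
    γ i * γ i = 1 := by
  have hii := h i i
  rw [if_pos rfl, ← two_smul K] at hii
  exact smul_right_injective A two_ne_zero hii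

theorem pairwise_mul_eq_neg_of_anticommutator_eq_ite {K A : Type*} [Semiring K] [Ring A]
    [Module K A] [DecidableEq ι] {γ : ι → A}
    (h : ∀ i j, γ i * γ j + γ j * γ i = if i = j then (2 : K) • (1 : A) else 0) :
    Pairwise fun i j => γ i * γ j = -(γ j * γ i) := fun i j hij =>
  eq_neg_of_add_eq_zero_left ((h i j).trans (if_neg hij))

variable {m R : Type*} [Fintype m] [DecidableEq m] [CommRing R] [NoZeroDivisors R] [CharZero R]
  {γ : ι → Matrix m m R}

theorem Matrix.trace_list_prod_eq_zero_of_anticomm (hsq : ∀ i, γ i * γ i = 1)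
    (hanti : Pairwise fun i j => γ i * γ j = -(γ j * γ i)) {l : List ι} (hl : l.Nodup)
    (hne : l ≠ []) (hmiss : ∃ i, i ∉ l) : trace (l.map γ).prod = 0 := by
  have anticomm_prod {i : ι} {s : List ι} (hi : i ∉ s) (hs : Odd s.length) :
      γ i * (s.map γ).prod = -((s.map γ).prod * γ i) := by
    rw [List.mul_prod_of_forall_mul_eq_neg, List.length_map, hs.neg_one_pow, neg_one_mul,
      neg_mul]
    simp only [List.mem_map]
    rintro _ ⟨j, hj, rfl⟩
    exact hanti fun hij => hi (hij ▸ hj)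
  rcases Nat.even_or_odd l.length with heven | hodd
  · obtain ⟨a, t, rfl⟩ := List.exists_cons_of_ne_nil hne
    have ht : Odd t.length := by simpa [Nat.even_add_one] using heven
    have h := anticomm_prod (List.nodup_cons.mp hl).1 ht
    refine trace_eq_zero_of_mul_eq_neg_mul (hsq a) ?_
    rw [List.map_cons, List.prod_cons, mul_assoc, neg_eq_iff_eq_neg.mp h.symm, mul_neg, neg_neg]
  · obtain ⟨i, hi⟩ := hmiss
    exact trace_eq_zero_of_mul_eq_neg_mul (hsq i) (anticomm_prod hi hodd)

theorem Matrix.trace_list_prod_map_one_add_smul_kronecker {n : Type*} [Fintype n] [DecidableEq n]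
    (hsq : ∀ i, γ i * γ i = 1) (hanti : Pairwise fun i j => γ i * γ j = -(γ j * γ i))
    (ε : ι → R) (Γ : ι → Matrix n n R) {l : List ι} (hl : l.Nodup) (hne : l ≠ []) :
    trace (l.map fun j => 1 + ε j • γ j ⊗ₖ Γ j).prod =
      Fintype.card m * Fintype.card n +
        (l.map ε).prod * trace (l.map γ).prod * trace (l.map Γ).prod := by
  have trace_prod (s : List ι) : trace (s.map fun j => ε j • γ j ⊗ₖ Γ j).prod =
      (s.map ε).prod * trace (s.map γ).prod * trace (s.map Γ).prod := by
    rw [List.prod_map_smul, list_prod_map_kronecker, trace_smul, trace_kronecker, smul_eq_mul,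
      mul_assoc]
  rw [trace_list_prod_map_one_add (fun j => ε j • γ j ⊗ₖ Γ j) hl hne, trace_prod,
    Fintype.card_prod, Nat.cast_mul]
  intro s hs hs0 hsl
  rw [trace_prod, trace_list_prod_eq_zero_of_anticomm hsq hanti (hs.nodup hl) hs0, mul_zero,
    zero_mul]
  by_contra! hsub
  exact hsl (hs.eq_of_length (hs.length_le.antisymm (hl.length_le_of_subset fun i _ => hsub i)))

end Clifford

section InvolutionProjection

variable {K A : Type*} [Field K] [Ring A] [Algebra K A] {S : A}

theorem mul_half_one_add_of_mul_self (hS : S * S = 1) :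
    S * ((2 : K)⁻¹ • (1 + S)) = (2 : K)⁻¹ • (1 + S) := by
  rw [mul_smul_comm, mul_add, mul_one, hS, add_comm]

theorem isIdempotentElem_half_one_add [NeZero (2 : K)] (hS : S * S = 1) :
    IsIdempotentElem ((2 : K)⁻¹ • (1 + S)) := by
  rw [IsIdempotentElem, smul_mul_assoc, add_mul, one_mul, mul_half_one_add_of_mul_self hS,
    ← two_smul K, smul_smul, inv_mul_cancel₀ two_ne_zero, one_smul]

end InvolutionProjection

section JointEigenspace

variable {ι K m : Type*} [Field K] [Fintype m] [DecidableEq m]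

theorem Matrix.ker_mulVecLin_sub_smul_one {T : Matrix m m K} {ε : K} (hε : ε * ε = 1) :
    LinearMap.ker (mulVecLin (T - ε • 1)) = LinearMap.ker (mulVecLin (ε • T - 1)) := by
  have : ε • T - 1 = ε • (T - ε • 1) := by rw [smul_sub, smul_smul, hε, one_smul]
  rw [this, ← toLin'_apply', ← toLin'_apply', map_smul,
    LinearMap.ker_smul _ _ (left_ne_zero_of_mul_eq_one hε)]

variable [NeZero (2 : K)]

theorem Matrix.half_one_add_mulVec_of_mulVec_eq {S : Matrix m m K} {x : m → K}
    (hx : S *ᵥ x = x) : ((2 : K)⁻¹ • (1 + S)) *ᵥ x = x := by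
  rw [smul_mulVec, add_mulVec, one_mulVec, hx, ← two_smul K x, smul_smul,
    inv_mul_cancel₀ two_ne_zero, one_smul]

theorem Matrix.isProj_list_prod_map_half_one_add {S : ι → Matrix m m K}
    (hS : ∀ j, S j * S j = 1) (hcomm : ∀ i j, Commute (S i) (S j)) {l : List ι}
    (hl : ∀ j, j ∈ l) :
    LinearMap.IsProj (⨅ j, LinearMap.ker (mulVecLin (S j - 1)))
      (mulVecLin (l.map fun j => (2 : K)⁻¹ • (1 + S j)).prod) := by
  set Q := fun j => (2 : K)⁻¹ • (1 + S j)
  have hQ_mul_prod (j : ι) : Q j * (l.map Q).prod = (l.map Q).prod := by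
    refine List.mul_prod_eq_prod_of_isIdempotentElem (List.mem_map_of_mem (hl j))
      (isIdempotentElem_half_one_add (hS j)) ?_
    simp only [List.mem_map]
    rintro _ ⟨i, -, rfl⟩
    exact (((Commute.one_left _).add_left ((Commute.one_right _).add_right (hcomm j i))).smul_right
      _).smul_left _
  have mem_iff (x : m → K) :
      x ∈ ⨅ j, LinearMap.ker (mulVecLin (S j - 1)) ↔ ∀ j, S j *ᵥ x = x := by
    simp only [Submodule.mem_iInf, LinearMap.mem_ker, mulVecLin_apply, sub_mulVec, one_mulVec,
      sub_eq_zero]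
  refine ⟨fun x => (mem_iff _).mpr fun j => ?_, fun x hx => ?_⟩
  · rw [mulVecLin_apply, mulVec_mulVec, ← hQ_mul_prod j, ← mul_assoc,
      mul_half_one_add_of_mul_self (hS j)]
  · refine List.prod_induction (· *ᵥ x = x) (fun A B hA hB => ?_) (one_mulVec x) ?_
    · rw [← mulVec_mulVec, hB, hA]
    · simp only [List.mem_map]
      rintro _ ⟨j, -, rfl⟩
      exact half_one_add_mulVec_of_mulVec_eq ((mem_iff x).mp hx j)

theorem Matrix.finrank_iInf_ker_sub_one_eq_trace {S : ι → Matrix m m K}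
    (hS : ∀ j, S j * S j = 1) (hcomm : ∀ i j, Commute (S i) (S j)) {l : List ι}
    (hl : ∀ j, j ∈ l) :
    (Module.finrank K ↥(⨅ j, LinearMap.ker (mulVecLin (S j - 1))) : K) =
      (2 : K)⁻¹ ^ l.length * trace (l.map (1 + S ·)).prod := by
  rw [← (isProj_list_prod_map_half_one_add hS hcomm hl).trace, ← toLin'_apply', trace_toLin'_eq,
    ← smul_eq_mul, ← trace_smul, ← List.length_map (f := (1 + S ·)), List.smul_prod, List.map_map]
  rfl

end JointEigenspace

theorem finrank_iInf_ker_kronecker_sub_smul_one {K a b : Type*} [Field K] [CharZero K]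
    [Fintype a] [DecidableEq a] [Fintype b] [DecidableEq b] {d : ℕ} (hd : d ≠ 0)
    {γ : Fin d → Matrix a a K} {Γ : Fin d → Matrix b b K}
    (hγ : ∀ i j, γ i * γ j + γ j * γ i = if i = j then (2 : K) • (1 : Matrix a a K) else 0)
    (hΓ : ∀ i j, Γ i * Γ j + Γ j * Γ i = if i = j then (2 : K) • (1 : Matrix b b K) else 0)
    {c c' : K} (hγ_prod : (List.ofFn γ).prod = c • 1) (hΓ_prod : (List.ofFn Γ).prod = c' • 1)
    {ε : Fin d → K} (hε : ∀ j, ε j * ε j = 1) :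
    (Module.finrank K ↥(⨅ j, LinearMap.ker (mulVecLin (γ j ⊗ₖ Γ j - ε j • 1))) : K) =
      2⁻¹ ^ d * (Fintype.card a * Fintype.card b) * (1 + (∏ j, ε j) * c * c') := by
  have hγ_sq := mul_self_eq_one_of_anticommutator_eq_ite hγ
  have hΓ_sq := mul_self_eq_one_of_anticommutator_eq_ite hΓ
  have hγ_anti := pairwise_mul_eq_neg_of_anticommutator_eq_ite hγ
  have hΓ_anti := pairwise_mul_eq_neg_of_anticommutator_eq_ite hΓ
  set S := fun j => ε j • γ j ⊗ₖ Γ j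
  have hS (j : Fin d) : S j * S j = 1 := by
    rw [smul_mul_smul_comm, hε, kronecker_mul_self_eq_one (hγ_sq j) (hΓ_sq j), one_smul]
  have hS_comm (i j : Fin d) : Commute (S i) (S j) := by
    rcases eq_or_ne i j with rfl | hij
    · exact Commute.refl _
    · exact ((commute_kronecker_of_mul_eq_neg (hγ_anti hij) (hΓ_anti hij)).smul_left _).smul_right _
  rw [iInf_congr fun j => ker_mulVecLin_sub_smul_one (hε j),
    finrank_iInf_ker_sub_one_eq_trace hS hS_comm List.mem_finRange,
    trace_list_prod_map_one_add_smul_kronecker hγ_sq hγ_anti ε Γ (List.nodup_finRange d)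
      (List.ne_nil_of_length_pos (by simpa using Nat.pos_of_ne_zero hd)),
    ← List.ofFn_eq_map, ← List.ofFn_eq_map, ← List.ofFn_eq_map, hγ_prod, hΓ_prod, List.prod_ofFn,
    List.length_finRange]
  simp only [trace_smul, trace_one, smul_eq_mul]
  ring

theorem weyl_joint_eigenspace_dim_general
    (d : ℕ) (hd : Odd d) (n : ℕ) (hn : n = 2 ^ ((d - 1) / 2))
    (γ Γm : Fin d → Matrix (Fin n) (Fin n) ℂ)
    (hγac : ∀ i j, γ i * γ j + γ j * γ i =
      if i = j then (2 : ℂ) • (1 : Matrix (Fin n) (Fin n) ℂ) else 0)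
    (hγhand : (List.ofFn γ).prod = (Complex.I) ^ ((d - 1) / 2) • (1 : Matrix (Fin n) (Fin n) ℂ))
    (hΓac : ∀ i j, Γm i * Γm j + Γm j * Γm i =
      if i = j then (2 : ℂ) • (1 : Matrix (Fin n) (Fin n) ℂ) else 0)
    (hΓhand : (List.ofFn Γm).prod = (Complex.I) ^ ((d - 1) / 2) • (1 : Matrix (Fin n) (Fin n) ℂ))
    (η : Fin d → ℤ) (hη : ∀ j, η j = 1 ∨ η j = -1) :
    Module.finrank ℂ
      ↥(⨅ j : Fin d, LinearMap.ker
          (Matrix.mulVecLin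
            (Matrix.kroneckerMap (· * ·) (γ j) (Γm j)
              - (η j : ℂ) • (1 : Matrix (Fin n × Fin n) (Fin n × Fin n) ℂ)))) =
      (if (d % 4 = 1 ∧ Even ((Finset.univ.filter fun j => η j = -1)).card)
          ∨ (d % 4 = 3 ∧ Odd ((Finset.univ.filter fun j => η j = -1)).card)
        then 1 else 0) := by
  obtain ⟨k, rfl⟩ := hd
  rw [show (2 * k + 1 - 1) / 2 = k by omega] at hn hγhand hΓhand
  set m := (Finset.univ.filter fun j => η j = -1).card
  have hη_sq (j : Fin (2 * k + 1)) : (η j : ℂ) * η j = 1 := by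
    rcases hη j with h | h <;> simp [h]
  have hdim : (Module.finrank ℂ ↥(⨅ j, LinearMap.ker
      (mulVecLin (γ j ⊗ₖ Γm j - (η j : ℂ) • 1))) : ℂ) = 2⁻¹ * (1 + (-1) ^ (m + k)) := by
    rw [finrank_iInf_ker_kronecker_sub_smul_one (by omega) hγac hΓac hγhand hΓhand hη_sq,
      Finset.prod_intCast_eq_neg_one_pow_card_filter _ fun j _ => hη j, Fintype.card_fin, hn]
    have h2 : (2 : ℂ)⁻¹ ^ (2 * k) * (2 ^ k * 2 ^ k) = 1 := by
      rw [← pow_add, ← two_mul, ← mul_pow, inv_mul_cancel₀ two_ne_zero, one_pow]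
    have hI : Complex.I ^ k * Complex.I ^ k = (-1) ^ k := by rw [← mul_pow, Complex.I_mul_I]
    push_cast
    rw [pow_succ]
    linear_combination 2⁻¹ * (1 + (-1) ^ m * (Complex.I ^ k * Complex.I ^ k)) * h2 +
      2⁻¹ * (-1) ^ m * hI
  have hparity : ((2 * k + 1) % 4 = 1 ∧ Even m ∨ (2 * k + 1) % 4 = 3 ∧ Odd m) ↔ Even (m + k) := by
    rw [Nat.even_iff, Nat.even_iff, Nat.odd_iff]
    omega
  rw [← Nat.cast_inj (R := ℂ), hdim, if_congr hparity rfl rfl]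
  rcases Nat.even_or_odd (m + k) with h | h
  · rw [if_pos h, h.neg_one_pow]
    norm_num
  · rw [if_neg (Nat.not_even_iff_odd.mpr h), h.neg_one_pow]
    norm_num

/-- joint eigenspaces of the commuting involutions `γ_j ⊗ Γ_j` built from two
left-handed Clifford families of odd size `d`. -/
theorem weyl_joint_eigenspace_dim
    (d : ℕ) (hd : Odd d) (n : ℕ) (hn : n = 2 ^ ((d - 1) / 2))
    (γ Γm : Fin d → Matrix (Fin n) (Fin n) ℂ)
    (hγsa : ∀ j, (γ j)ᴴ = γ j)
    (hγac : ∀ i j, γ i * γ j + γ j * γ i =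
      if i = j then (2 : ℂ) • (1 : Matrix (Fin n) (Fin n) ℂ) else 0)
    (hγhand : (List.ofFn γ).prod = (Complex.I) ^ ((d - 1) / 2) • (1 : Matrix (Fin n) (Fin n) ℂ))
    (hΓsa : ∀ j, (Γm j)ᴴ = Γm j)
    (hΓac : ∀ i j, Γm i * Γm j + Γm j * Γm i =
      if i = j then (2 : ℂ) • (1 : Matrix (Fin n) (Fin n) ℂ) else 0)
    (hΓhand : (List.ofFn Γm).prod = (Complex.I) ^ ((d - 1) / 2) • (1 : Matrix (Fin n) (Fin n) ℂ))
    (η : Fin d → ℤ) (hη : ∀ j, η j = 1 ∨ η j = -1) :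
    Module.finrank ℂ
      ↥(⨅ j : Fin d, LinearMap.ker
          (Matrix.mulVecLin
            (Matrix.kroneckerMap (· * ·) (γ j) (Γm j)
              - (η j : ℂ) • (1 : Matrix (Fin n × Fin n) (Fin n × Fin n) ℂ)))) =
      (if (d % 4 = 1 ∧ Even ((Finset.univ.filter fun j => η j = -1)).card)
          ∨ (d % 4 = 3 ∧ Odd ((Finset.univ.filter fun j => η j = -1)).card)
        then 1 else 0) :=
  weyl_joint_eigenspace_dim_general d hd n hn γ Γm hγac hγhand hΓac hΓhand η hη
end

section
/- Let n be an odd positive integer and let σ = (σ_1,…,σ_n) be a left-handed Clifford family of size n acting on ℂ^N with N = 2^{(n−1)/2}. For a vector q ∈ ℝ^n write σ·q = Σ_{i=1}^n q_i σ_i. Then for any column vectors q_1,…,q_n ∈ ℝ^n one has Tr((σ·q_1)(σ·q_2)⋯(σ·q_n)) = 2^{(n−1)/2} · i^{(n−1)/2} · det(q_1,…,q_n), where det(q_1,…,q_n) is the determinant of the n×n real matrix whose k-th column is q_k. -/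
/-!
The map `(q₁, …, qₙ) ↦ Tr((σ·q₁)⋯(σ·qₙ))` is `ℝ`-multilinear, and it is alternating: if two of
the `qₖ` coincide they span a proper subspace, so some `u ≠ 0` is orthogonal to all of them.
Then `σ·u` squares to `|u|²·1` and anticommutes with every `σ·qₖ`, hence with their product of
odd length `n`, which forces the trace of that product to vanish. An alternating `n`-form on `ℝⁿ`
is its value on the standard basis times the determinant, and that value is
`Tr(σ₁⋯σₙ) = Tr(i^((n-1)/2)·1) = 2^((n-1)/2)·i^((n-1)/2)`.
-/

open Matrix

theorem List.mul_prod_eq_neg_one_pow_zsmul {A : Type*} [Ring A] (x : A) (l : List A)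
    (hl : ∀ a ∈ l, x * a = -(a * x)) :
    x * l.prod = (-1 : ℤ) ^ l.length • (l.prod * x) := by
  induction l with
  | nil => simp
  | cons a t ih =>
    rw [List.prod_cons, ← mul_assoc, hl a (by simp), neg_mul, mul_assoc,
      ih fun b hb => hl b (by simp [hb]), mul_smul_comm, List.length_cons, pow_succ, mul_comm,
      mul_smul, ← mul_assoc]
    simp

theorem Matrix.trace_eq_zero_of_mul_eq_neg {ι K : Type*} [Fintype ι] [DecidableEq ι] [Field K]
    [NeZero (2 : K)] {x P : Matrix ι ι K} {c : K} (hc : c ≠ 0) (hx : x * x = c • 1)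
    (hxP : x * P = -(P * x)) : P.trace = 0 := by
  have h : c * P.trace = -(c * P.trace) := calc
    c * P.trace = (x * (x * P)).trace := by
      rw [← mul_assoc, hx, smul_one_mul, trace_smul, smul_eq_mul]
    _ = (x * P * x).trace := trace_mul_comm _ _
    _ = -(c * P.trace) := by
      rw [hxP, neg_mul, mul_assoc, hx, mul_smul_one, trace_neg, trace_smul, smul_eq_mul]
  have : (2 : K) * c * P.trace = 0 := by linear_combination h
  exact (mul_eq_zero.mp this).resolve_left (mul_ne_zero two_ne_zero hc)

theorem Matrix.exists_ne_zero_forall_dotProduct_eq_zero {ι K : Type*} [Fintype ι] [DecidableEq ι]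
    [Field K] {v : ι → ι → K} (hv : ¬ Function.Injective v) :
    ∃ u ≠ 0, ∀ k, v k ⬝ᵥ u = 0 := by
  obtain ⟨i, j, hij, hne⟩ : ∃ i j, v i = v j ∧ i ≠ j := by
    simpa [Function.Injective] using hv
  obtain ⟨u, hu, hMu⟩ := exists_mulVec_eq_zero_iff.mpr (det_zero_of_row_eq (M := of v) hne hij)
  exact ⟨u, hu, fun k => congrFun hMu k⟩

theorem AlternatingMap.apply_eq_basis_det_smul {R M N ι : Type*} [CommRing R] [AddCommGroup M]
    [Module R M] [AddCommGroup N] [Module R N] [Fintype ι] [DecidableEq ι]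
    (f : M [⋀^ι]→ₗ[R] N) (e : Module.Basis ι R M) (v : ι → M) : f v = e.det v • f e := by
  suffices f = e.det.smulRight (f e) by
    conv_lhs => rw [this]
    exact AlternatingMap.smulRight_apply _ _ _
  refine e.ext_alternating fun r hr => ?_
  let π : Equiv.Perm ι := Equiv.ofBijective r (Finite.injective_iff_bijective.1 hr)
  change f (e ∘ π) = e.det.smulRight (f e) (e ∘ π)
  simp [AlternatingMap.map_perm, e.det_self]

section Clifford

variable {n : ℕ} {ι : Type*}

def CliffordRelations [Fintype ι] [DecidableEq ι] (σ : Fin n → Matrix ι ι ℂ) : Prop :=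
  ∀ i j, σ i * σ j + σ j * σ i = if i = j then (2 : ℂ) • (1 : Matrix ι ι ℂ) else 0

def cliffordDot (σ : Fin n → Matrix ι ι ℂ) : (Fin n → ℝ) →ₗ[ℝ] Matrix ι ι ℂ where
  toFun v := ∑ i, (v i : ℂ) • σ i
  map_add' u v := by simp [add_smul, Finset.sum_add_distrib]
  map_smul' c v := by simp [Finset.smul_sum, mul_smul, Complex.coe_smul]

theorem cliffordDot_apply (σ : Fin n → Matrix ι ι ℂ) (v : Fin n → ℝ) :
    cliffordDot σ v = ∑ i, (v i : ℂ) • σ i := rfl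

theorem cliffordDot_single (σ : Fin n → Matrix ι ι ℂ) (k : Fin n) :
    cliffordDot σ (Pi.single k 1) = σ k := by
  simp [cliffordDot_apply, Pi.single_apply]

variable [Fintype ι] [DecidableEq ι] {σ : Fin n → Matrix ι ι ℂ}

theorem cliffordDot_mul_add_mul (hσ : CliffordRelations σ) (u w : Fin n → ℝ) :
    cliffordDot σ u * cliffordDot σ w + cliffordDot σ w * cliffordDot σ u =
      ((2 * (u ⬝ᵥ w) : ℝ) : ℂ) • 1 := by
  calc _ = ∑ i, ∑ j, ((u i * w j : ℝ) : ℂ) • (σ i * σ j + σ j * σ i) := by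
        simp only [cliffordDot_apply, Finset.sum_mul_sum, smul_mul_smul_comm, smul_add,
          Finset.sum_add_distrib, Complex.ofReal_mul]
        rw [Finset.sum_comm (f := fun i j => ((u i : ℂ) * w j) • (σ j * σ i))]
        simp only [mul_comm (u _ : ℂ)]
    _ = ((2 * (u ⬝ᵥ w) : ℝ) : ℂ) • 1 := by
        simp only [show ∀ i j, σ i * σ j + σ j * σ i = _ from hσ]
        simp [dotProduct, Finset.sum_smul, Finset.mul_sum, smul_smul, mul_comm]

theorem cliffordDot_mul_self (hσ : CliffordRelations σ) (u : Fin n → ℝ) :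
    cliffordDot σ u * cliffordDot σ u = ((u ⬝ᵥ u : ℝ) : ℂ) • 1 := by
  have h := cliffordDot_mul_add_mul hσ u u
  rw [← two_smul ℂ, Complex.ofReal_mul, mul_smul] at h
  exact smul_right_injective _ two_ne_zero h

theorem cliffordDot_anticomm_of_dotProduct_eq_zero (hσ : CliffordRelations σ)
    {u w : Fin n → ℝ} (h : u ⬝ᵥ w = 0) :
    cliffordDot σ u * cliffordDot σ w = -(cliffordDot σ w * cliffordDot σ u) :=
  eq_neg_of_add_eq_zero_left (by simpa [h] using cliffordDot_mul_add_mul hσ u w)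

theorem trace_prod_cliffordDot_eq_zero_of_forall_dotProduct_eq_zero (hσ : CliffordRelations σ)
    {m : ℕ} (hm : Odd m) (v : Fin m → Fin n → ℝ) {u : Fin n → ℝ} (hu : u ≠ 0)
    (huv : ∀ k, v k ⬝ᵥ u = 0) : (List.ofFn fun k => cliffordDot σ (v k)).prod.trace = 0 := by
  refine trace_eq_zero_of_mul_eq_neg (c := ((u ⬝ᵥ u : ℝ) : ℂ))
    (by exact_mod_cast dotProduct_self_eq_zero.not.mpr hu) (cliffordDot_mul_self hσ u) ?_
  rw [List.mul_prod_eq_neg_one_pow_zsmul, List.length_ofFn, hm.neg_one_pow, neg_one_smul]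
  simp only [List.forall_mem_ofFn_iff]
  exact fun k => cliffordDot_anticomm_of_dotProduct_eq_zero hσ (dotProduct_comm u (v k) ▸ huv k)

variable (σ) in
noncomputable def cliffordTraceForm (hσ : CliffordRelations σ) (hn : Odd n) :
    (Fin n → ℝ) [⋀^Fin n]→ₗ[ℝ] ℂ where
  toMultilinearMap := (traceLinearMap ι ℝ ℂ).compMultilinearMap
    ((MultilinearMap.mkPiAlgebraFin ℝ n (Matrix ι ι ℂ)).compLinearMap fun _ => cliffordDot σ)
  map_eq_zero_of_eq' v i j hij hne := by
    obtain ⟨u, hu, huv⟩ := exists_ne_zero_forall_dotProduct_eq_zero fun h => hne (h hij)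
    simpa using trace_prod_cliffordDot_eq_zero_of_forall_dotProduct_eq_zero hσ hn v hu huv

theorem cliffordTraceForm_apply (hσ : CliffordRelations σ) (hn : Odd n) (v : Fin n → Fin n → ℝ) :
    cliffordTraceForm σ hσ hn v = (List.ofFn fun k => cliffordDot σ (v k)).prod.trace := by
  simp [cliffordTraceForm]

theorem cliffordTraceForm_basisFun (hσ : CliffordRelations σ) (hn : Odd n) :
    cliffordTraceForm σ hσ hn (Pi.basisFun ℝ (Fin n)) = (List.ofFn σ).prod.trace := by
  simp [cliffordTraceForm_apply, cliffordDot_single]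

end Clifford

theorem clifford_trace_det_general
    (n : ℕ) (hn : Odd n) (N : ℕ) (hN : N = 2 ^ ((n - 1) / 2))
    (σ : Fin n → Matrix (Fin N) (Fin N) ℂ)
    (hσac : ∀ i j, σ i * σ j + σ j * σ i =
      if i = j then (2 : ℂ) • (1 : Matrix (Fin N) (Fin N) ℂ) else 0)
    (hσhand : (List.ofFn σ).prod = (Complex.I) ^ ((n - 1) / 2) • (1 : Matrix (Fin N) (Fin N) ℂ))
    (q : Fin n → Fin n → ℝ) :
    Matrix.trace ((List.ofFn fun k : Fin n => ∑ i : Fin n, ((q k i : ℝ) : ℂ) • σ i).prod) =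
      (2 : ℂ) ^ ((n - 1) / 2) * Complex.I ^ ((n - 1) / 2) *
        ((Matrix.det (Matrix.of fun i k : Fin n => q k i) : ℝ) : ℂ) := by
  have hσ : CliffordRelations σ := hσac
  have hdet : (Pi.basisFun ℝ (Fin n)).det q = (of fun i k => q k i).det := by
    rw [Pi.basisFun_det_apply, ← det_transpose]
    rfl
  calc _ = cliffordTraceForm σ hσ hn q := (cliffordTraceForm_apply hσ hn q).symm
    _ = (Pi.basisFun ℝ (Fin n)).det q • cliffordTraceForm σ hσ hn (Pi.basisFun ℝ (Fin n)) :=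
        AlternatingMap.apply_eq_basis_det_smul _ _ q
    _ = (of fun i k => q k i).det • (List.ofFn σ).prod.trace := by
        rw [hdet, cliffordTraceForm_basisFun]
    _ = _ := by
        rw [hσhand, trace_smul, trace_one, Fintype.card_fin, hN, Complex.real_smul, smul_eq_mul]
        push_cast
        ring

/-- trace of a product of `n` Clifford contractions `σ·q_k` for a left-handed
Clifford family of odd size `n`. -/
theorem clifford_trace_det
    (n : ℕ) (hn : Odd n) (N : ℕ) (hN : N = 2 ^ ((n - 1) / 2))
    (σ : Fin n → Matrix (Fin N) (Fin N) ℂ)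
    (hσsa : ∀ j, (σ j)ᴴ = σ j)
    (hσac : ∀ i j, σ i * σ j + σ j * σ i =
      if i = j then (2 : ℂ) • (1 : Matrix (Fin N) (Fin N) ℂ) else 0)
    (hσhand : (List.ofFn σ).prod = (Complex.I) ^ ((n - 1) / 2) • (1 : Matrix (Fin N) (Fin N) ℂ))
    (q : Fin n → Fin n → ℝ) :
    Matrix.trace ((List.ofFn fun k : Fin n => ∑ i : Fin n, ((q k i : ℝ) : ℂ) • σ i).prod) =
      (2 : ℂ) ^ ((n - 1) / 2) * Complex.I ^ ((n - 1) / 2) *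
        ((Matrix.det (Matrix.of fun i k : Fin n => q k i) : ℝ) : ℂ) :=
  clifford_trace_det_general n hn N hN σ hσac hσhand q
end

section
/- Let n be an odd positive integer and let σ = (σ_1,…,σ_n) be a left-handed Clifford family of size n acting on ℂ^N with N = 2^{(n−1)/2}. Let m be an odd positive integer with m < n and let f : {1,…,m} → {1,…,n} be any function. Then the trace of the product σ_{f(1)} σ_{f(2)} ⋯ σ_{f(m)} vanishes: Tr(σ_{f(1)} ⋯ σ_{f(m)}) = 0. -/
open Matrix

lemma anticomm_list_prod {N : ℕ} (A : Matrix (Fin N) (Fin N) ℂ)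
    (L : List (Matrix (Fin N) (Fin N) ℂ)) (h : ∀ B ∈ L, A * B = -(B * A)) :
    A * L.prod = ((-1 : ℂ) ^ L.length) • (L.prod * A) := by
  induction L with
  | nil => simp
  | cons B L ih =>
      have hB := h B (by simp)
      have ih' := ih (fun C hC => h C (by simp [hC]))
      simp only [List.prod_cons, List.length_cons]
      calc A * (B * L.prod) = (A * B) * L.prod := by rw [mul_assoc]
        _ = -(B * (A * L.prod)) := by rw [hB]; simp [mul_assoc]
        _ = -(B * (((-1 : ℂ) ^ L.length) • (L.prod * A))) := by rw [ih']
        _ = ((-1 : ℂ) ^ (L.length + 1)) • (B * L.prod * A) := by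
              rw [pow_succ, Matrix.mul_smul, mul_neg_one, neg_smul, ← mul_assoc]

/-- the trace of a product of an odd number `m < n` of generators of a left-handed
Clifford family of odd size `n` vanishes. -/
theorem clifford_trace_odd_short_product_vanishes
    (n : ℕ) (hn : Odd n) (N : ℕ) (hN : N = 2 ^ ((n - 1) / 2))
    (σ : Fin n → Matrix (Fin N) (Fin N) ℂ)
    (hσsa : ∀ j, (σ j)ᴴ = σ j)
    (hσac : ∀ i j, σ i * σ j + σ j * σ i =
      if i = j then (2 : ℂ) • (1 : Matrix (Fin N) (Fin N) ℂ) else 0)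
    (hσhand : (List.ofFn σ).prod = (Complex.I) ^ ((n - 1) / 2) • (1 : Matrix (Fin N) (Fin N) ℂ))
    (m : ℕ) (hm : Odd m) (hmn : m < n) (f : Fin m → Fin n) :
    Matrix.trace ((List.ofFn fun k : Fin m => σ (f k)).prod) = 0 := by
  -- find a generator index not in the range of f
  have hns : ¬ Function.Surjective f := by
    intro hs
    have := Fintype.card_le_of_surjective f hs
    simp at this
    omega
  rw [Function.Surjective] at hns
  push_neg at hns
  obtain ⟨j, hj⟩ := hns
  set P : Matrix (Fin N) (Fin N) ℂ := (List.ofFn fun k : Fin m => σ (f k)).prod with hP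
  -- σ j squares to 1
  have hsq : σ j * σ j = 1 := by
    have h2 : (2 : ℂ) • (σ j * σ j) = (2 : ℂ) • (1 : Matrix (Fin N) (Fin N) ℂ) := by
      have := hσac j j
      simp only [if_pos rfl] at this
      rw [two_smul]
      exact this
    exact smul_right_injective _ (two_ne_zero) h2
  -- σ j anticommutes with each factor
  have hanti : ∀ B ∈ (List.ofFn fun k : Fin m => σ (f k)), σ j * B = -(B * σ j) := by
    intro B hB
    rw [List.mem_ofFn] at hB
    obtain ⟨k, rfl⟩ := hB
    have hne : j ≠ f k := fun h => hj k h.symm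
    have := hσac j (f k)
    rw [if_neg hne] at this
    exact eq_neg_of_add_eq_zero_left this
  have key : σ j * P = -(P * σ j) := by
    have := anticomm_list_prod (σ j) _ hanti
    rw [← hP] at this
    rw [this]
    simp [Odd.neg_one_pow (by simpa using hm)]
  have htr : Matrix.trace P = - Matrix.trace P := by
    calc Matrix.trace P = Matrix.trace (σ j * σ j * P) := by rw [hsq, one_mul]
      _ = Matrix.trace ((σ j * P) * σ j) := by
            rw [mul_assoc]; exact Matrix.trace_mul_comm _ _
      _ = Matrix.trace (-(P * σ j) * σ j) := by rw [key]
      _ = - Matrix.trace P := by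
            rw [neg_mul, Matrix.trace_neg, mul_assoc, hsq, mul_one]
  linear_combination (1/2 : ℂ) * htr
end

section
/- Let d be an odd positive integer, let γ = (γ_1,…,γ_d) and Γ = (Γ_1,…,Γ_d) be two left-handed Clifford families of size d acting on ℂ^n with n = 2^{(d−1)/2}, let κ > 0 and let b_1,…,b_d be nonzero real numbers. Set M = Σ_{j=1}^d b_j (γ_j ⊗ Γ_j) and |b| = Σ_{j=1}^d |b_j|. Suppose v ∈ ℂ^{n²} satisfies M v = |b| v, and define φ : ℝ^d → ℂ^{n²} by φ(x) = exp(−Σ_{j=1}^d |b_j| x_j² / (2κ)) · v. Then for every x ∈ ℝ^d, −κ² Σ_{j=1}^d ∂_j² φ(x) + (Σ_{j=1}^d b_j² x_j²) φ(x) − κ M φ(x) = 0. -/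
open Matrix

/-- Partial derivative in the `j`-th coordinate direction of a function on `ℝ^d`. -/
noncomputable def pderiv1 {d : ℕ} {E : Type*} [NormedAddCommGroup E] [NormedSpace ℝ E]
    (ψ : (Fin d → ℝ) → E) (j : Fin d) (x : Fin d → ℝ) : E :=
  fderiv ℝ ψ x (Pi.single j 1)

/-!
Writing `φ(x) = g(x) v` with `g(x) = exp (∑ⱼ aⱼ xⱼ²)` and `aⱼ = -|bⱼ| / (2κ)`, one has
`∂ⱼ² g = (4 aⱼ² xⱼ² + 2 aⱼ) g`. Hence `-κ² ∂ⱼ² φ + bⱼ² xⱼ² φ = κ |bⱼ| φ` for each `j`, and summing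
over `j` gives `κ |b| φ = κ M φ`, since `v` is an eigenvector of `M` for the eigenvalue `|b|`.
-/

theorem sum_smul_proj_apply_single {R ι : Type*} [CommSemiring R] [TopologicalSpace R]
    [IsTopologicalSemiring R] [Fintype ι] [DecidableEq ι] (c : ι → R) (j : ι) :
    (∑ i, c i • ContinuousLinearMap.proj (R := R) (φ := fun _ : ι => R) i) (Pi.single j 1) =
      c j := by
  simp [Pi.single_apply]

section PartialDerivative

variable {d : ℕ} {E : Type*} [NormedAddCommGroup E] [NormedSpace ℝ E]

theorem HasFDerivAt.pderiv1_eq {ψ : (Fin d → ℝ) → E} {ψ' : (Fin d → ℝ) →L[ℝ] E}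
    {x : Fin d → ℝ} (h : HasFDerivAt ψ ψ' x) (j : Fin d) :
    pderiv1 ψ j x = ψ' (Pi.single j 1) := by
  rw [pderiv1, h.fderiv]

theorem pderiv1_smul_const {f : (Fin d → ℝ) → ℝ} {x : Fin d → ℝ}
    (hf : DifferentiableAt ℝ f x) (v : E) (j : Fin d) :
    pderiv1 (fun y => f y • v) j x = pderiv1 f j x • v := by
  rw [pderiv1, pderiv1, fderiv_smul_const hf, ContinuousLinearMap.smulRight_apply]

end PartialDerivative

section Gaussian

variable {d : ℕ}

noncomputable def gaussian (a y : Fin d → ℝ) : ℝ :=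
  Real.exp (∑ i, a i * y i ^ 2)

theorem exp_neg_sum_div_eq_gaussian (c : Fin d → ℝ) (κ : ℝ) (y : Fin d → ℝ) :
    Real.exp (-(∑ i, c i * y i ^ 2) / (2 * κ)) = gaussian (fun i => -c i / (2 * κ)) y := by
  rw [gaussian, neg_div, Finset.sum_div, ← Finset.sum_neg_distrib]
  exact congrArg Real.exp (Finset.sum_congr rfl fun i _ => by ring)

theorem hasFDerivAt_gaussian (a y : Fin d → ℝ) :
    HasFDerivAt (gaussian a)
      (gaussian a y • ∑ i, (2 * a i * y i) • ContinuousLinearMap.proj (R := ℝ) i) y := by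
  have hquadratic : HasFDerivAt (fun y : Fin d → ℝ => ∑ i, a i * y i ^ 2)
      (∑ i, (2 * a i * y i) • ContinuousLinearMap.proj (R := ℝ) (φ := fun _ : Fin d => ℝ) i)
      y := by
    refine HasFDerivAt.fun_sum fun i _ => ?_
    refine (((hasFDerivAt_apply i y).pow 2).const_mul (a i)).congr_fderiv ?_
    ext k
    simp only [Nat.add_one_sub_one, pow_one, nsmul_eq_mul, Nat.cast_ofNat, _root_.smul_apply,
      ContinuousLinearMap.proj_apply, smul_eq_mul]
    ring
  exact hquadratic.exp

@[fun_prop]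
theorem differentiable_gaussian (a : Fin d → ℝ) : Differentiable ℝ (gaussian a) :=
  fun y => (hasFDerivAt_gaussian a y).differentiableAt

theorem pderiv1_gaussian (a : Fin d → ℝ) (j : Fin d) :
    pderiv1 (gaussian a) j = fun y => 2 * a j * y j * gaussian a y := by
  ext y
  rw [(hasFDerivAt_gaussian a y).pderiv1_eq, _root_.smul_apply,
    sum_smul_proj_apply_single, smul_eq_mul, mul_comm]

theorem pderiv1_pderiv1_gaussian (a : Fin d → ℝ) (j : Fin d) (y : Fin d → ℝ) :
    pderiv1 (pderiv1 (gaussian a) j) j y =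
      (4 * a j ^ 2 * y j ^ 2 + 2 * a j) * gaussian a y := by
  have hlinear : HasFDerivAt (fun y : Fin d → ℝ => 2 * a j * y j)
      ((2 * a j) • ContinuousLinearMap.proj (R := ℝ) j) y :=
    (hasFDerivAt_apply j y).const_mul _
  rw [pderiv1_gaussian, (hlinear.fun_mul (hasFDerivAt_gaussian a y)).pderiv1_eq]
  simp only [_root_.add_apply, _root_.smul_apply, sum_smul_proj_apply_single,
    ContinuousLinearMap.proj_apply, Pi.single_eq_same, smul_eq_mul]
  ring

theorem pderiv1_pderiv1_gaussian_smul {E : Type*} [NormedAddCommGroup E] [NormedSpace ℝ E]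
    (a : Fin d → ℝ) (v : E) (j : Fin d) (x : Fin d → ℝ) :
    pderiv1 (pderiv1 (fun y => gaussian a y • v) j) j x =
      ((4 * a j ^ 2 * x j ^ 2 + 2 * a j) * gaussian a x) • v := by
  have hfirst : pderiv1 (fun y => gaussian a y • v) j = fun y => pderiv1 (gaussian a) j y • v :=
    funext fun y => pderiv1_smul_const (differentiable_gaussian a y) v j
  have hdiff : Differentiable ℝ (pderiv1 (gaussian a) j) := by
    rw [pderiv1_gaussian]
    fun_prop
  rw [hfirst, pderiv1_smul_const (hdiff x), pderiv1_pderiv1_gaussian]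

end Gaussian

theorem gaussian_zero_mode_general
    (d : ℕ) (n : ℕ)
    (κ : ℝ) (hκ : 0 < κ) (b : Fin d → ℝ)
    (M : Matrix (Fin n × Fin n) (Fin n × Fin n) ℂ)
    (v : Fin n × Fin n → ℂ) (hv : M.mulVec v = ((∑ j, |b j| : ℝ) : ℂ) • v)
    (φ : (Fin d → ℝ) → (Fin n × Fin n) → ℂ)
    (hφ : φ = fun x => Complex.exp (((-(∑ j, |b j| * (x j) ^ 2)) / (2 * κ) : ℝ) : ℂ) • v)
    (x : Fin d → ℝ) :
    (-(κ : ℂ) ^ 2) • ∑ j, pderiv1 (fun y => pderiv1 φ j y) j x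
      + ((∑ j, (b j) ^ 2 * (x j) ^ 2 : ℝ) : ℂ) • φ x
      - (κ : ℂ) • M.mulVec (φ x) = 0 := by
  set a : Fin d → ℝ := fun j => -|b j| / (2 * κ)
  have hφ_gaussian : φ = fun y => gaussian a y • v := by
    rw [hφ]
    funext y
    rw [← Complex.ofReal_exp, exp_neg_sum_div_eq_gaussian, Complex.coe_smul]
  have hsecond (j : Fin d) : pderiv1 (fun y => pderiv1 φ j y) j x =
      ((4 * a j ^ 2 * x j ^ 2 + 2 * a j) * gaussian a x) • v := by
    rw [hφ_gaussian]
    exact pderiv1_pderiv1_gaussian_smul a v j x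
  have hcoeff : -κ ^ 2 * ∑ j, (4 * a j ^ 2 * x j ^ 2 + 2 * a j) + ∑ j, b j ^ 2 * x j ^ 2 =
      κ * ∑ j, |b j| := by
    rw [Finset.mul_sum, Finset.mul_sum, ← Finset.sum_add_distrib]
    refine Finset.sum_congr rfl fun j _ => ?_
    rw [← sq_abs (b j)]
    simp only [a]
    field_simp
    ring
  simp only [hsecond]
  simp only [hφ_gaussian, Matrix.mulVec_smul, hv, ← Complex.coe_smul, smul_smul, ← Finset.sum_smul,
    ← sub_smul, ← add_smul]
  refine smul_eq_zero_of_left ?_ v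
  have hreal : -κ ^ 2 * ∑ j, (4 * a j ^ 2 * x j ^ 2 + 2 * a j) * gaussian a x
      + (∑ j, b j ^ 2 * x j ^ 2) * gaussian a x - κ * (gaussian a x * ∑ j, |b j|) = 0 := by
    rw [← Finset.sum_mul]
    linear_combination gaussian a x * hcoeff
  exact_mod_cast hreal

/-- the Gaussian state built from an extremal eigenvector of
`M = Σ_j b_j (γ_j ⊗ Γ_j)` is a zero mode of the harmonic operator
`−κ²Δ + Σ_j b_j² x_j² − κ M`. -/
theorem gaussian_zero_mode
    (d : ℕ) (hd : Odd d) (n : ℕ) (hn : n = 2 ^ ((d - 1) / 2))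
    (γ Γm : Fin d → Matrix (Fin n) (Fin n) ℂ)
    (hγsa : ∀ j, (γ j)ᴴ = γ j)
    (hγac : ∀ i j, γ i * γ j + γ j * γ i =
      if i = j then (2 : ℂ) • (1 : Matrix (Fin n) (Fin n) ℂ) else 0)
    (hγhand : (List.ofFn γ).prod = (Complex.I) ^ ((d - 1) / 2) • (1 : Matrix (Fin n) (Fin n) ℂ))
    (hΓsa : ∀ j, (Γm j)ᴴ = Γm j)
    (hΓac : ∀ i j, Γm i * Γm j + Γm j * Γm i =
      if i = j then (2 : ℂ) • (1 : Matrix (Fin n) (Fin n) ℂ) else 0)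
    (hΓhand : (List.ofFn Γm).prod = (Complex.I) ^ ((d - 1) / 2) • (1 : Matrix (Fin n) (Fin n) ℂ))
    (κ : ℝ) (hκ : 0 < κ) (b : Fin d → ℝ) (hb : ∀ j, b j ≠ 0)
    (M : Matrix (Fin n × Fin n) (Fin n × Fin n) ℂ)
    (hM : M = ∑ j, (b j : ℂ) • Matrix.kroneckerMap (· * ·) (γ j) (Γm j))
    (v : Fin n × Fin n → ℂ) (hv : M.mulVec v = ((∑ j, |b j| : ℝ) : ℂ) • v)
    (φ : (Fin d → ℝ) → (Fin n × Fin n) → ℂ)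
    (hφ : φ = fun x => Complex.exp (((-(∑ j, |b j| * (x j) ^ 2)) / (2 * κ) : ℝ) : ℂ) • v)
    (x : Fin d → ℝ) :
    (-(κ : ℂ) ^ 2) • ∑ j, pderiv1 (fun y => pderiv1 φ j y) j x
      + ((∑ j, (b j) ^ 2 * (x j) ^ 2 : ℝ) : ℂ) • φ x
      - (κ : ℂ) • M.mulVec (φ x) = 0 :=
  gaussian_zero_mode_general d n κ hκ b M v hv φ hφ x
end

section
/- Let N be a positive integer and let H : ℝ → M_N(ℂ) be a continuous function whose values are Hermitian matrices, periodic with period 1 (H(k+1) = H(k) for all k), and such that the zero set Z = {k ∈ [0,1) : H(k) is not invertible} is finite. Then there exists ε₀ > 0 such that for all 0 < ε < ε₀: Σ_{k* ∈ Z} ( Sig(H(k*+ε)) − Sig(H(k*−ε)) ) = 0, where for an invertible Hermitian matrix A, Sig(A) denotes the number of positive eigenvalues minus the number of negative eigenvalues of A, counted with multiplicity. -/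
/-!
If `A` is invertible Hermitian and `‖B - A‖` is smaller than every `|λᵢ(A)|`, then the quadratic
form of `B` stays positive on the span of the positive eigenvectors of `A` and negative on the span
of its negative ones; comparing dimensions shows that `B` has at least as many positive and as many
negative eigenvalues as `A`, hence the same signature. So `Sig (H t)` is locally constant wherever
`H t` is invertible, and across one period the signature changes only at the gap-closing points.
The jumps therefore telescope to `Sig (H (a + 1)) - Sig (H a)`, which vanishes by periodicity.
-/

open Matrix

/-- The signature of a Hermitian matrix: number of positive eigenvalues minus number of
negative eigenvalues, counted with multiplicity. -/
noncomputable def hermSig {N : ℕ} {A : Matrix (Fin N) (Fin N) ℂ} (hA : A.IsHermitian) : ℤ :=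
  ((Finset.univ.filter fun i => 0 < hA.eigenvalues i).card : ℤ)
    - ((Finset.univ.filter fun i => hA.eigenvalues i < 0).card : ℤ)

open Finset Filter Topology
open scoped InnerProductSpace

namespace OrthonormalBasis

variable {𝕜 E ι : Type*} [RCLike 𝕜] [NormedAddCommGroup E] [InnerProductSpace 𝕜 E]
  [Fintype ι] (b : OrthonormalBasis ι 𝕜 E)

def finsetSpan (S : Finset ι) : Submodule 𝕜 E :=
  Submodule.span 𝕜 (Set.range fun i : S => b i)

lemma finrank_finsetSpan (S : Finset ι) : Module.finrank 𝕜 (b.finsetSpan S) = #S :=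
  (finrank_span_eq_card (b.orthonormal.linearIndependent.comp _ Subtype.val_injective)).trans
    (Fintype.card_coe S)

lemma repr_eq_zero_of_mem_finsetSpan {S : Finset ι} {x : E} (hx : x ∈ b.finsetSpan S) {i : ι}
    (hi : i ∉ S) : b.repr x i = 0 := by
  classical
  induction hx using Submodule.span_induction with
  | mem y hy =>
    obtain ⟨j, rfl⟩ := hy
    rw [b.repr_self, PiLp.single_apply, if_neg (by rintro rfl; exact hi j.2)]
  | zero => simp
  | add y z _ _ hy hz => simp [hy, hz]
  | smul c y _ hy => simp [hy]

variable {T : E →L[𝕜] E} {μ : ι → ℝ} (hT : ∀ i, T (b i) = (μ i : 𝕜) • b i)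
include hT

lemma reApplyInnerSelf_eq_sum (x : E) :
    T.reApplyInnerSelf x = ∑ i, μ i * ‖b.repr x i‖ ^ 2 := by
  have hTx : T x = ∑ i, (μ i * b.repr x i) • b i := by
    conv_lhs => rw [← b.sum_repr x]
    simp only [map_sum, map_smul, hT, smul_smul, mul_comm]
  rw [T.reApplyInnerSelf_apply, hTx, sum_inner, map_sum]
  refine sum_congr rfl fun i _ => ?_
  rw [inner_smul_left, ← b.repr_apply_apply, map_mul (starRingEnd 𝕜), RCLike.conj_ofReal,
    mul_assoc, RCLike.conj_mul, ← RCLike.ofReal_pow, ← RCLike.ofReal_mul, RCLike.ofReal_re]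

lemma reApplyInnerSelf_sub_mul_norm_sq (a : ℝ) (x : E) :
    T.reApplyInnerSelf x - a * ‖x‖ ^ 2 = ∑ i, (μ i - a) * ‖b.repr x i‖ ^ 2 := by
  rw [b.reApplyInnerSelf_eq_sum hT, ← b.repr.norm_map, EuclideanSpace.norm_sq_eq, mul_sum,
    ← sum_sub_distrib]
  simp only [sub_mul]

variable {S : Finset ι} {a : ℝ} {x : E}

lemma mul_norm_sq_le_reApplyInnerSelf (ha : ∀ i ∈ S, a ≤ μ i) (hx : x ∈ b.finsetSpan S) :
    a * ‖x‖ ^ 2 ≤ T.reApplyInnerSelf x := by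
  rw [← sub_nonneg, b.reApplyInnerSelf_sub_mul_norm_sq hT]
  refine sum_nonneg fun i _ => ?_
  by_cases hi : i ∈ S
  · exact mul_nonneg (sub_nonneg.2 (ha i hi)) (sq_nonneg _)
  · simp [b.repr_eq_zero_of_mem_finsetSpan hx hi]

lemma reApplyInnerSelf_le_mul_norm_sq (ha : ∀ i ∈ S, μ i ≤ a) (hx : x ∈ b.finsetSpan S) :
    T.reApplyInnerSelf x ≤ a * ‖x‖ ^ 2 := by
  rw [← sub_nonpos, b.reApplyInnerSelf_sub_mul_norm_sq hT]
  refine sum_nonpos fun i _ => ?_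
  by_cases hi : i ∈ S
  · exact mul_nonpos_of_nonpos_of_nonneg (sub_nonpos.2 (ha i hi)) (sq_nonneg _)
  · simp [b.repr_eq_zero_of_mem_finsetSpan hx hi]

end OrthonormalBasis

namespace ContinuousLinearMap

variable {𝕜 E : Type*} [RCLike 𝕜] [NormedAddCommGroup E] [InnerProductSpace 𝕜 E]

lemma reApplyInnerSelf_le_opNorm_mul_norm_sq (T : E →L[𝕜] E) (x : E) :
    T.reApplyInnerSelf x ≤ ‖T‖ * ‖x‖ ^ 2 :=
  calc T.reApplyInnerSelf x ≤ ‖⟪T x, x⟫_𝕜‖ := RCLike.re_le_norm _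
    _ ≤ ‖T x‖ * ‖x‖ := norm_inner_le_norm _ _
    _ ≤ ‖T‖ * ‖x‖ * ‖x‖ := by gcongr; exact T.le_opNorm x
    _ = ‖T‖ * ‖x‖ ^ 2 := by ring

lemma disjoint_of_reApplyInnerSelf_separated {f g : E →L[𝕜] E} {V W : Submodule 𝕜 E} {a c : ℝ}
    (hV : ∀ x ∈ V, a * ‖x‖ ^ 2 ≤ f.reApplyInnerSelf x)
    (hW : ∀ x ∈ W, g.reApplyInnerSelf x ≤ c * ‖x‖ ^ 2) (hfg : ‖f - g‖ < a - c) :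
    Disjoint V W := by
  refine Submodule.disjoint_def.2 fun x hxV hxW => by_contra fun hx => ?_
  have hsub : (f - g).reApplyInnerSelf x = f.reApplyInnerSelf x - g.reApplyInnerSelf x := by
    simp only [reApplyInnerSelf_apply, _root_.sub_apply, inner_sub_left, map_sub]
  have hbound := (f - g).reApplyInnerSelf_le_opNorm_mul_norm_sq x
  have hlt : ‖f - g‖ * ‖x‖ ^ 2 < (a - c) * ‖x‖ ^ 2 := by gcongr
  linarith [hV x hxV, hW x hxW]

end ContinuousLinearMap

lemma OrthonormalBasis.card_add_card_le_finrank {𝕜 E ι κ : Type*} [RCLike 𝕜]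
    [NormedAddCommGroup E] [InnerProductSpace 𝕜 E] [FiniteDimensional 𝕜 E] [Fintype ι]
    [Fintype κ] (b : OrthonormalBasis ι 𝕜 E) (b' : OrthonormalBasis κ 𝕜 E)
    {f g : E →L[𝕜] E} {μ : ι → ℝ} {ν : κ → ℝ} (hf : ∀ i, f (b i) = (μ i : 𝕜) • b i)
    (hg : ∀ j, g (b' j) = (ν j : 𝕜) • b' j) {S : Finset ι} {T : Finset κ} {a c : ℝ}
    (hS : ∀ i ∈ S, a ≤ μ i) (hT : ∀ j ∈ T, ν j ≤ c) (hfg : ‖f - g‖ < a - c) :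
    #S + #T ≤ Module.finrank 𝕜 E := by
  rw [← b.finrank_finsetSpan S, ← b'.finrank_finsetSpan T]
  exact Submodule.finrank_add_finrank_le_of_disjoint <|
    ContinuousLinearMap.disjoint_of_reApplyInnerSelf_separated
      (fun _ hx => b.mul_norm_sq_le_reApplyInnerSelf hf hS hx)
      (fun _ hx => b'.reApplyInnerSelf_le_mul_norm_sq hg hT hx) hfg

namespace Matrix.IsHermitian

variable {𝕜 n : Type*} [RCLike 𝕜] [Fintype n] [DecidableEq n] {A B : Matrix n n 𝕜}

lemma toEuclideanCLM_eigenvectorBasis (hA : A.IsHermitian) (i : n) :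
    toEuclideanCLM (n := n) (𝕜 := 𝕜) A (hA.eigenvectorBasis i) =
      (hA.eigenvalues i : 𝕜) • hA.eigenvectorBasis i := by
  apply WithLp.ofLp_injective
  rw [ofLp_toEuclideanCLM, hA.mulVec_eigenvectorBasis, WithLp.ofLp_smul,
    RCLike.real_smul_eq_coe_smul (K := 𝕜)]

lemma eigenvalues_ne_zero (hA : A.IsHermitian) (hAu : IsUnit A) (i : n) :
    hA.eigenvalues i ≠ 0 := by
  have hdet : A.det ≠ 0 := ((isUnit_iff_isUnit_det A).1 hAu).ne_zero
  rw [hA.det_eq_prod_eigenvalues, prod_ne_zero_iff] at hdet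
  exact_mod_cast hdet i (mem_univ i)

lemma card_pos_add_card_neg_le (hA : A.IsHermitian) :
    #{i | 0 < hA.eigenvalues i} + #{i | hA.eigenvalues i < 0} ≤ Fintype.card n :=
  calc #{i | 0 < hA.eigenvalues i} + #{i | hA.eigenvalues i < 0}
      ≤ #{i | 0 < hA.eigenvalues i} + #{i | ¬ 0 < hA.eigenvalues i} := by
        gcongr with i
        exact lt_asymm
    _ = Fintype.card n := by rw [card_filter_add_card_filter_not, card_univ]

lemma card_pos_add_card_neg_eq (hA : A.IsHermitian) (hAu : IsUnit A) :
    #{i | 0 < hA.eigenvalues i} + #{i | hA.eigenvalues i < 0} = Fintype.card n := by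
  have hneg : #{i | hA.eigenvalues i < 0} = #{i | ¬ 0 < hA.eigenvalues i} :=
    congrArg card <| filter_congr fun i _ =>
      ⟨lt_asymm, fun h => (not_lt.1 h).lt_of_ne (hA.eigenvalues_ne_zero hAu i)⟩
  rw [hneg, card_filter_add_card_filter_not, card_univ]

open scoped Matrix.Norms.L2Operator

variable (hA : A.IsHermitian) (hB : B.IsHermitian) {μ : ℝ} (hμ : ∀ i, μ ≤ |hA.eigenvalues i|)
  (hAB : ‖A - B‖ < μ)
include hμ hAB

lemma card_pos_le_of_norm_sub_lt :
    #{i | 0 < hA.eigenvalues i} ≤ #{i | 0 < hB.eigenvalues i} := by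
  have hcard := hA.eigenvectorBasis.card_add_card_le_finrank hB.eigenvectorBasis
    hA.toEuclideanCLM_eigenvectorBasis hB.toEuclideanCLM_eigenvectorBasis
    (S := {i | 0 < hA.eigenvalues i}) (T := {j | hB.eigenvalues j ≤ 0}) (a := μ) (c := 0)
    (fun i hi => (hμ i).trans (abs_of_pos (mem_filter.1 hi).2).le)
    (fun j hj => (mem_filter.1 hj).2) (by rwa [sub_zero, ← map_sub])
  have hsplit := card_filter_add_card_filter_not (s := univ) (fun j => 0 < hB.eigenvalues j)
  simp only [not_lt, card_univ, finrank_euclideanSpace] at hcard hsplit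
  omega

lemma card_neg_le_of_norm_sub_lt :
    #{i | hA.eigenvalues i < 0} ≤ #{i | hB.eigenvalues i < 0} := by
  have hcard := hB.eigenvectorBasis.card_add_card_le_finrank hA.eigenvectorBasis
    hB.toEuclideanCLM_eigenvectorBasis hA.toEuclideanCLM_eigenvectorBasis
    (S := {j | 0 ≤ hB.eigenvalues j}) (T := {i | hA.eigenvalues i < 0}) (a := 0) (c := -μ)
    (fun j hj => (mem_filter.1 hj).2)
    (fun i hi => le_neg.2 ((hμ i).trans (abs_of_neg (mem_filter.1 hi).2).le))
    (by rwa [zero_sub, neg_neg, ← map_sub, l2_opNorm_toEuclideanCLM, norm_sub_rev])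
  have hsplit := card_filter_add_card_filter_not (s := univ) (fun j => 0 ≤ hB.eigenvalues j)
  simp only [not_le, card_univ, finrank_euclideanSpace] at hcard hsplit
  omega

end Matrix.IsHermitian

section hermSig

variable {N : ℕ}

lemma hermSig_congr {A B : Matrix (Fin N) (Fin N) ℂ} (hA : A.IsHermitian) (hB : B.IsHermitian)
    (h : A = B) : hermSig hA = hermSig hB := by
  subst h; rfl

open scoped Matrix.Norms.L2Operator in
theorem eventually_hermSig_eq {A : Matrix (Fin N) (Fin N) ℂ} (hA : A.IsHermitian)
    (hAu : IsUnit A) : ∀ᶠ B in 𝓝 A, ∀ hB : B.IsHermitian, hermSig hB = hermSig hA := by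
  obtain ⟨μ, hμ0, hμ⟩ : ∃ μ > 0, ∀ i, μ ≤ |hA.eigenvalues i| := by
    have hsmall : ∀ᶠ μ in 𝓝 0, ∀ i, μ ≤ |hA.eigenvalues i| :=
      eventually_all.2 fun i => eventually_le_nhds (abs_pos.2 (hA.eigenvalues_ne_zero hAu i))
    exact ((eventually_nhdsWithin_of_eventually_nhds hsmall).and
      (self_mem_nhdsWithin : ∀ᶠ μ in 𝓝[>] (0 : ℝ), 0 < μ)).exists.imp fun μ h => ⟨h.2, h.1⟩
  filter_upwards [Metric.ball_mem_nhds A hμ0] with B hB hBherm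
  rw [Metric.mem_ball, dist_comm, dist_eq_norm] at hB
  have hpos := hA.card_pos_le_of_norm_sub_lt hBherm hμ hB
  have hneg := hA.card_neg_le_of_norm_sub_lt hBherm hμ hB
  have hAsum := hA.card_pos_add_card_neg_eq hAu
  have hBsum := hBherm.card_pos_add_card_neg_le
  simp only [Fintype.card_fin] at hAsum hBsum
  unfold hermSig
  omega

lemma hermSig_eq_of_isPreconnected {X : Type*} [TopologicalSpace X] {s : Set X}
    (hs : IsPreconnected s) {H : X → Matrix (Fin N) (Fin N) ℂ} (hH : ContinuousOn H s)
    (hherm : ∀ x, (H x).IsHermitian) (hunit : ∀ x ∈ s, IsUnit (H x)) {x y : X} (hx : x ∈ s)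
    (hy : y ∈ s) : hermSig (hherm x) = hermSig (hherm y) :=
  hs.constant (f := fun x => hermSig (hherm x)) (fun t ht =>
    continuousWithinAt_const.congr_of_eventuallyEq
      (((hH t ht).eventually (eventually_hermSig_eq (hherm t) (hunit t ht))).mono
        fun u hu => hu (hherm u)) rfl) hx hy

end hermSig

lemma sub_eq_sum_sub_of_eq_on_gaps {α G : Type*} [AddCommGroup α] [LinearOrder α]
    [IsOrderedAddMonoid α] [AddCommGroup G] (f : α → G) (F : Finset α) {a b ε : α} (hε : 0 < ε)
    (hab : a ≤ b) (hF : ∀ k ∈ F, a ≤ k - ε ∧ k + ε ≤ b)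
    (hsep : ∀ k ∈ F, ∀ k' ∈ F, k < k' → k + ε ≤ k' - ε)
    (hconst : ∀ x y, a ≤ x → x ≤ y → y ≤ b → (∀ t ∈ Set.Icc x y, t ∉ F) → f x = f y) :
    f b - f a = ∑ k ∈ F, (f (k + ε) - f (k - ε)) := by
  classical
  induction F using Finset.induction_on_max generalizing b with
  | empty => rw [hconst a b le_rfl hab le_rfl (by simp), sub_self, sum_empty]
  | insert m F hlt ih =>
    have hm := hF m (mem_insert_self m F)
    have hm_lt : m - ε < m + ε := (sub_lt_self m hε).trans (lt_add_of_pos_right m hε)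
    have hright : f (m + ε) = f b := hconst _ _ (hm.1.trans hm_lt.le) hm.2 le_rfl
      fun t ht htF => (lt_add_of_pos_right m hε).not_ge <| ht.1.trans <|
        (mem_insert.1 htF).elim le_of_eq fun htF => (hlt t htF).le
    have hleft : f (m - ε) - f a = ∑ k ∈ F, (f (k + ε) - f (k - ε)) :=
      ih hm.1
        (fun k hk => ⟨(hF k (mem_insert_of_mem hk)).1,
          hsep k (mem_insert_of_mem hk) m (mem_insert_self m F) (hlt k hk)⟩)
        (fun k hk k' hk' => hsep k (mem_insert_of_mem hk) k' (mem_insert_of_mem hk'))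
        fun x y hx hxy hy hgap => hconst x y hx hxy (hy.trans (hm_lt.le.trans hm.2))
          fun t ht htF => (mem_insert.1 htF).elim
            (by rintro rfl; exact (sub_lt_self t hε).not_ge (ht.2.trans hy)) (hgap t ht)
    rw [sum_insert fun h => (hlt m h).false, ← hleft, ← hright]
    abel

lemma eventually_sub_eq_sum_sub {G : Type*} [AddCommGroup G] (f : ℝ → G) (F : Finset ℝ)
    {a b : ℝ} (hab : a ≤ b) (hF : ∀ k ∈ F, k ∈ Set.Ioo a b)
    (hconst : ∀ x y, a ≤ x → x ≤ y → y ≤ b → (∀ t ∈ Set.Icc x y, t ∉ F) → f x = f y) :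
    ∀ᶠ ε in 𝓝[>] 0, f b - f a = ∑ k ∈ F, (f (k + ε) - f (k - ε)) := by
  have hle : ∀ c : ℝ, 0 < c → ∀ᶠ ε in 𝓝[>] (0 : ℝ), ε ≤ c := fun c hc =>
    eventually_nhdsWithin_of_eventually_nhds (eventually_le_nhds hc)
  have hinside : ∀ᶠ ε in 𝓝[>] (0 : ℝ), ∀ k ∈ F, a ≤ k - ε ∧ k + ε ≤ b :=
    (eventually_all_finset F).2 fun k hk => by
      filter_upwards [hle (k - a) (by linarith [(hF k hk).1]),
        hle (b - k) (by linarith [(hF k hk).2])] with ε h₁ h₂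
      constructor <;> linarith
  have hsep : ∀ᶠ ε in 𝓝[>] (0 : ℝ), ∀ k ∈ F, ∀ k' ∈ F, k < k' → k + ε ≤ k' - ε :=
    (eventually_all_finset F).2 fun k _ => (eventually_all_finset F).2 fun k' _ => by
      rcases lt_or_ge k k' with hkk' | hkk'
      · filter_upwards [hle ((k' - k) / 2) (by linarith)] with ε hε _
        linarith
      · exact Eventually.of_forall fun _ h => absurd h hkk'.not_gt
  filter_upwards [self_mem_nhdsWithin, hinside, hsep] with ε hε hinside hsep
  exact sub_eq_sum_sub_of_eq_on_gaps f F hε hab hinside hsep hconst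

lemma Function.Periodic.eventually_sum_sub_eq_zero {G : Type*} [AddCommGroup G] {f : ℝ → G}
    (hf : Function.Periodic f 1) {F : Finset ℝ} (hF : ∀ k ∈ F, k ∈ Set.Ico 0 1)
    (hconst : ∀ x y, x ≤ y → (∀ t ∈ Set.Icc x y, Int.fract t ∉ F) → f x = f y) :
    ∀ᶠ ε in 𝓝[>] 0, ∑ k ∈ F, (f (k + ε) - f (k - ε)) = 0 := by
  -- On `[a, a + 1]` with `a ∈ (-1, 0)` and `F < a + 1`, the only points of `F + ℤ` are those of `F`.
  obtain ⟨a, ⟨haF, ha1⟩, ha0⟩ : ∃ a : ℝ, ((∀ k ∈ F, k < a + 1) ∧ -1 < a) ∧ a < 0 := by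
    refine (Eventually.and ?_ (self_mem_nhdsWithin : ∀ᶠ a in 𝓝[<] (0 : ℝ), a < 0)).exists
    refine eventually_nhdsWithin_of_eventually_nhds
      (((eventually_all_finset F).2 fun k hk => ?_).and (eventually_gt_nhds (by norm_num)))
    exact ((continuous_add_const (1 : ℝ)).tendsto 0).eventually
      (eventually_gt_nhds (by simpa using (hF k hk).2))
  have hfract : ∀ t ∈ Set.Icc a (a + 1), t ∉ F → Int.fract t ∉ F := by
    rintro t ⟨hat, hta⟩ htF
    rcases lt_or_ge t 0 with ht | ht
    · rw [← Int.fract_add_one, Int.fract_eq_self.2 ⟨by linarith, by linarith⟩]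
      exact fun h => (haF _ h).not_ge (by linarith)
    · rwa [Int.fract_eq_self.2 ⟨ht, by linarith⟩]
  filter_upwards [eventually_sub_eq_sum_sub f F (by linarith)
    (fun k hk => ⟨by linarith [(hF k hk).1], haF k hk⟩)
    fun x y hx hxy hy hgap => hconst x y hxy fun t ht =>
      hfract t ⟨hx.trans ht.1, ht.2.trans hy⟩ (hgap t ht)] with ε hε
  rw [← hε, hf a, sub_self]

theorem nielsen_ninomiya_one_dim_general
    (N : ℕ) (H : ℝ → Matrix (Fin N) (Fin N) ℂ)
    (hcont : Continuous H) (hherm : ∀ k, (H k).IsHermitian)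
    (hper : ∀ k, H (k + 1) = H k)
    (Z : Set ℝ) (hZdef : Z = {k | k ∈ Set.Ico (0 : ℝ) 1 ∧ ¬ IsUnit (H k)})
    (hZfin : Z.Finite) :
    ∃ ε₀ > (0 : ℝ), ∀ ε : ℝ, 0 < ε → ε < ε₀ →
      ∑ k ∈ hZfin.toFinset,
        (hermSig (hherm (k + ε)) - hermSig (hherm (k - ε))) = 0 := by
  have hmem : ∀ k, k ∈ hZfin.toFinset ↔ k ∈ Set.Ico (0 : ℝ) 1 ∧ ¬ IsUnit (H k) := by
    simp [hZdef]
  have hunit : ∀ t, Int.fract t ∉ hZfin.toFinset → IsUnit (H t) := fun t ht => by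
    have hH := Function.Periodic.sub_int_mul_eq (c := 1) hper (x := t) ⌊t⌋
    rw [mul_one, Int.self_sub_floor] at hH
    rw [← hH]
    by_contra hu
    exact ht ((hmem _).2 ⟨⟨Int.fract_nonneg t, Int.fract_lt_one t⟩, hu⟩)
  have hsum := Function.Periodic.eventually_sum_sub_eq_zero
    (f := fun t => hermSig (hherm t)) (fun t => hermSig_congr _ _ (hper t))
    (fun k hk => ((hmem k).1 hk).1) fun x y hxy hgap =>
      hermSig_eq_of_isPreconnected isPreconnected_Icc hcont.continuousOn hherm
        (fun t ht => hunit t (hgap t ht)) (Set.left_mem_Icc.2 hxy) (Set.right_mem_Icc.2 hxy)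
  obtain ⟨ε₀, hε₀, hsub⟩ := mem_nhdsGT_iff_exists_Ioo_subset.1 hsum
  exact ⟨ε₀, hε₀, fun ε hε hεε₀ => hsub ⟨hε, hεε₀⟩⟩

/-- one-dimensional Nielsen–Ninomiya theorem: the signature jumps of a periodic
continuous Hermitian family at its finitely many gap-closing points in one period sum to zero. -/
theorem nielsen_ninomiya_one_dim
    (N : ℕ) (hN : 0 < N) (H : ℝ → Matrix (Fin N) (Fin N) ℂ)
    (hcont : Continuous H) (hherm : ∀ k, (H k).IsHermitian)
    (hper : ∀ k, H (k + 1) = H k)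
    (Z : Set ℝ) (hZdef : Z = {k | k ∈ Set.Ico (0 : ℝ) 1 ∧ ¬ IsUnit (H k)})
    (hZfin : Z.Finite) :
    ∃ ε₀ > (0 : ℝ), ∀ ε : ℝ, 0 < ε → ε < ε₀ →
      ∑ k ∈ hZfin.toFinset,
        (hermSig (hherm (k + ε)) - hermSig (hherm (k - ε))) = 0 :=
  nielsen_ninomiya_one_dim_general N H hcont hherm hper Z hZdef hZfin
end
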